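/- Let φ be the standard G2 3-form on ℝ⁷ with associated cross product P defined by g(P(X,Y),Z) = φ(X,Y,Z), and let {eᵢ} be an orthonormal basis. Then: (1) X ⌟ φ = −(1/2) Σᵢ eᵢ ∧ P(eᵢ,X) as 2-forms (identifying vectors and covectors), and (2) ⋆φ = −(1/6) Σᵢ (eᵢ ⌟ φ) ∧ (eᵢ ⌟ φ). -/

import Mathlib

open Matrix BigOperators

/-- The sign of a 7-tuple of indices (Levi-Civita symbol on 7 letters). -/
noncomputable def eps7 (f : Fin 7 → Fin 7) : ℝ :=
  ∑ σ : Equiv.Perm (Fin 7), if (⇑σ = f) then ((Equiv.Perm.sign σ : ℤ) : ℝ) else 0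

/-- Fully antisymmetric indicator of the triple `(a,b,c)`. -/
noncomputable def eps3 (a b c i j k : Fin 7) : ℝ :=
  ∑ σ : Equiv.Perm (Fin 3),
    if (![i, j, k] = ![a, b, c] ∘ ⇑σ) then ((Equiv.Perm.sign σ : ℤ) : ℝ) else 0

/-- The standard G2 associative 3-form on ℝ⁷ (components, 0-indexed), with the sign
convention for which `⋆(φ ∧ ω)` has eigenvalues `-2` and `1` on 2-forms. -/
noncomputable def g2phi (i j k : Fin 7) : ℝ :=
  -(eps3 0 1 2 i j k + eps3 0 3 4 i j k + eps3 0 5 6 i j k + eps3 1 3 5 i j k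
    - eps3 1 4 6 i j k - eps3 2 3 6 i j k - eps3 2 4 5 i j k)



open Equiv Finset

/-!
Both identities rest on the completeness relation `∑ᵢ eᵢ ⊗ eᵢ = id` of an orthonormal basis,
which collapses each sum over the basis into a contraction of `φ`. For (1) this contraction is
`X^b φ_{jbk}`, and the antisymmetry of `φ` gives the factor `-1/2`. For (2) it remains to show
`ε_{ijklmop} φ_{ijk} = -2 ∑ₜ (φ_{tlm} φ_{top} - φ_{tlo} φ_{tmp} + φ_{tlp} φ_{tmo})`. Both sides are
alternating in `(l, m, o, p)`, so it suffices to check the 35 strictly increasing index tuples: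
a finite computation with integer tables of `φ` and of the Levi-Civita symbol, whose product
formula makes it computable.
-/

section Orthonormal

variable {ι R : Type*} [Fintype ι] [DecidableEq ι] [CommRing R] {e : ι → ι → R}

theorem sum_dotProduct_mul_dotProduct_of_orthonormal
    (he : ∀ i j, e i ⬝ᵥ e j = if i = j then 1 else 0) (u v : ι → R) :
    ∑ i, (e i ⬝ᵥ u) * (e i ⬝ᵥ v) = u ⬝ᵥ v := by
  have hE : (Matrix.of e)ᵀ * Matrix.of e = 1 := mul_eq_one_comm.mp <| by
    ext i j
    simpa [Matrix.mul_apply, dotProduct, Matrix.one_apply] using he i j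
  calc ∑ i, (e i ⬝ᵥ u) * (e i ⬝ᵥ v) = (Matrix.of e *ᵥ u) ⬝ᵥ (Matrix.of e *ᵥ v) := rfl
    _ = u ⬝ᵥ v := by
      rw [Matrix.dotProduct_mulVec, ← Matrix.vecMul_transpose, Matrix.vecMul_vecMul, hE,
        Matrix.vecMul_one]

theorem sum_mul_cross_of_orthonormal {φ : ι → ι → ι → R} {P : (ι → R) → (ι → R) → ι → R}
    (hP : ∀ X Y k, P X Y k = ∑ i, ∑ j, X i * Y j * φ i j k)
    (he : ∀ i j, e i ⬝ᵥ e j = if i = j then 1 else 0) (X : ι → R) (j k : ι) :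
    ∑ i, e i j * P (e i) X k = ∑ b, X b * φ j b k := by
  have hP' : ∀ i, P (e i) X k = e i ⬝ᵥ fun a => ∑ b, X b * φ a b k := fun i => by
    simp only [hP, dotProduct, mul_sum, mul_assoc]
  have hej : ∀ i, e i j = e i ⬝ᵥ Pi.single j 1 := fun i => by simp
  simp only [hP', hej, sum_dotProduct_mul_dotProduct_of_orthonormal he, single_one_dotProduct]

end Orthonormal

theorem sum_mul_eq_neg_half_sum_wedge_cross {ι K : Type*} [Fintype ι] [DecidableEq ι] [Field K]
    [NeZero (2 : K)] {φ : ι → ι → ι → K} (hφ₁₂ : ∀ a b c, φ b a c = -φ a b c)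
    (hφ₂₃ : ∀ a b c, φ a c b = -φ a b c) {P : (ι → K) → (ι → K) → ι → K}
    (hP : ∀ X Y k, P X Y k = ∑ i, ∑ j, X i * Y j * φ i j k) {e : ι → ι → K}
    (he : ∀ i j, e i ⬝ᵥ e j = if i = j then 1 else 0) (X : ι → K) (j k : ι) :
    ∑ i, X i * φ i j k = -(1 / 2) * ∑ i, (e i j * P (e i) X k - e i k * P (e i) X j) := by
  rw [sum_sub_distrib, sum_mul_cross_of_orthonormal hP he, sum_mul_cross_of_orthonormal hP he,
    ← sum_sub_distrib, mul_sum]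
  refine sum_congr rfl fun b _ => ?_
  rw [hφ₁₂ b j k, hφ₁₂ b k j, hφ₂₃ b j k]
  field_simp
  ring

section LeviCivita

variable {n : ℕ}

def leviCivita (f : Fin n → Fin n) : ℤ :=
  ∏ i, ∏ j ∈ Ioi i, ((f j : ℤ) - f i).sign

theorem leviCivita_eq_prod_ite (f : Fin n → Fin n) :
    leviCivita f = ∏ i, ∏ j, if i < j then ((f j : ℤ) - f i).sign else 1 := by
  simp only [leviCivita, ← prod_filter, filter_lt_eq_Ioi]

theorem leviCivita_perm (σ : Perm (Fin n)) : leviCivita σ = Perm.sign σ := by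
  rw [Perm.sign_eq_prod_prod_Ioi]
  push_cast
  refine prod_congr rfl fun i _ => prod_congr rfl fun j hj => ?_
  have hne : σ i ≠ σ j := σ.injective.ne (mem_Ioi.mp hj).ne
  split_ifs with h
  · exact Int.sign_eq_one_of_pos (by rw [sub_pos]; exact_mod_cast h)
  · have : σ j < σ i := lt_of_le_of_ne (not_lt.mp h) hne.symm
    exact Int.sign_eq_neg_one_of_neg (by rw [sub_neg]; exact_mod_cast this)

theorem leviCivita_eq_zero_of_not_injective {f : Fin n → Fin n} (hf : ¬Function.Injective f) :
    leviCivita f = 0 := by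
  obtain ⟨a, b, hfab, hab⟩ := Function.not_injective_iff.mp hf
  wlog hlt : a < b generalizing a b
  · exact this b a hfab.symm hab.symm (lt_of_le_of_ne (not_lt.mp hlt) hab.symm)
  exact prod_eq_zero (mem_univ a) (prod_eq_zero (mem_Ioi.mpr hlt) (by simp [hfab]))

theorem leviCivita_comp_swap (f : Fin n → Fin n) {a b : Fin n} (hab : a ≠ b) :
    leviCivita (f ∘ swap a b) = -leviCivita f := by
  by_cases hf : Function.Injective f
  · obtain ⟨σ, rfl⟩ : ∃ σ : Perm (Fin n), ⇑σ = f := ⟨ofBijective f hf.bijective_of_finite, rfl⟩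
    rw [← Perm.coe_mul, leviCivita_perm, leviCivita_perm, Perm.sign_mul, Perm.sign_swap hab]
    simp
  · have hf' : ¬Function.Injective (f ∘ swap a b) := fun h => hf <| by
      simpa [Function.comp_assoc] using h.comp (swap a b).injective
    rw [leviCivita_eq_zero_of_not_injective hf, leviCivita_eq_zero_of_not_injective hf', neg_zero]

end LeviCivita

theorem eq_zero_of_comp_swap_of_strictMono {α M : Type*} [LinearOrder α] [AddGroup M]
    [IsAddTorsionFree M] {n : ℕ} {D : (Fin (n + 1) → α) → M}
    (hswap : ∀ v (i : Fin n), D (v ∘ swap i.castSucc i.succ) = -D v)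
    (hmono : ∀ v, StrictMono v → D v = 0) (v : Fin (n + 1) → α) : D v = 0 := by
  have hperm : ∀ σ : Perm (Fin (n + 1)), ∀ w, D w = 0 → D (w ∘ σ) = 0 := by
    intro σ
    have hσ : σ ∈ Submonoid.closure (Set.range fun i : Fin n => swap i.castSucc i.succ) := by
      rw [Perm.mclosure_swap_castSucc_succ]; trivial
    induction hσ using Submonoid.closure_induction with
    | mem _ h =>
      obtain ⟨i, rfl⟩ := h
      intro w hw
      rw [hswap, hw, neg_zero]
    | one => exact fun w hw => hw
    | mul σ τ _ _ hσ hτ => exact fun w hw => hτ _ (hσ w hw)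
  set w := v ∘ Tuple.sort v
  suffices D w = 0 by simpa [w, Function.comp_assoc] using hperm (Tuple.sort v)⁻¹ w this
  by_cases hw : StrictMono w
  · exact hmono w hw
  obtain ⟨i, hi⟩ : ∃ i : Fin n, w i.castSucc = w i.succ := by
    simp only [Fin.strictMono_iff_lt_succ, not_forall, not_lt] at hw
    obtain ⟨i, hi⟩ := hw
    exact ⟨i, le_antisymm (Tuple.monotone_sort v i.castSucc_lt_succ.le) hi⟩
  have hfix : w ∘ swap i.castSucc i.succ = w := by
    rw [comp_swap_eq_update, hi, Function.update_eq_self, ← hi, Function.update_eq_self]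
  have := hswap w i
  rw [hfix] at this
  exact self_eq_neg.mp this

theorem eps7_eq_leviCivita (f : Fin 7 → Fin 7) : eps7 f = leviCivita f := by
  unfold eps7
  by_cases hf : Function.Injective f
  · obtain ⟨σ, rfl⟩ : ∃ σ : Perm (Fin 7), ⇑σ = f := ⟨ofBijective f hf.bijective_of_finite, rfl⟩
    rw [sum_eq_single σ (fun τ _ hτ => if_neg fun h => hτ (DFunLike.coe_injective h))
      (fun h => absurd (mem_univ σ) h), if_pos rfl, leviCivita_perm]
  · rw [leviCivita_eq_zero_of_not_injective hf, Int.cast_zero]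
    exact sum_eq_zero fun τ _ => if_neg fun h => hf (by rw [← h]; exact τ.injective)

theorem eps3_eq_det (a b c i j k : Fin 7) :
    eps3 a b c i j k =
      (Matrix.of fun r s : Fin 3 => if ![a, b, c] r = ![i, j, k] s then (1 : ℝ) else 0).det := by
  rw [Matrix.det_apply]
  refine sum_congr rfl fun σ _ => ?_
  simp only [Matrix.of_apply, prod_boole, mem_univ, true_implies, funext_iff, Function.comp_apply,
    eq_comm (a := ![a, b, c] (σ _))]
  split_ifs <;> simp [Units.smul_def]

def generalizedKronecker (a b c i j k : Fin 7) : ℤ :=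
  let d : Fin 7 → Fin 7 → ℤ := fun x y => if x = y then 1 else 0
  d a i * d b j * d c k - d a i * d b k * d c j - d a j * d b i * d c k
    + d a j * d b k * d c i + d a k * d b i * d c j - d a k * d b j * d c i

theorem eps3_eq_generalizedKronecker (a b c i j k : Fin 7) :
    eps3 a b c i j k = generalizedKronecker a b c i j k := by
  rw [eps3_eq_det, Matrix.det_fin_three]
  simp only [generalizedKronecker, Matrix.of_apply, Matrix.cons_val_zero, Matrix.cons_val_one,
    Matrix.cons_val_two]
  push_cast
  rfl

theorem generalizedKronecker_swap₁₂ (a b c i j k : Fin 7) :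
    generalizedKronecker a b c j i k = -generalizedKronecker a b c i j k := by
  simp only [generalizedKronecker]
  ring

theorem generalizedKronecker_swap₂₃ (a b c i j k : Fin 7) :
    generalizedKronecker a b c i k j = -generalizedKronecker a b c i j k := by
  simp only [generalizedKronecker]
  ring

def g2phiInt (i j k : Fin 7) : ℤ :=
  -(generalizedKronecker 0 1 2 i j k + generalizedKronecker 0 3 4 i j k
    + generalizedKronecker 0 5 6 i j k + generalizedKronecker 1 3 5 i j k
    - generalizedKronecker 1 4 6 i j k - generalizedKronecker 2 3 6 i j k
    - generalizedKronecker 2 4 5 i j k)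

theorem g2phi_eq_g2phiInt (i j k : Fin 7) : g2phi i j k = g2phiInt i j k := by
  simp only [g2phi, g2phiInt, eps3_eq_generalizedKronecker]
  push_cast
  rfl

theorem g2phiInt_swap₁₂ (i j k : Fin 7) : g2phiInt j i k = -g2phiInt i j k := by
  simp only [g2phiInt, generalizedKronecker_swap₁₂ _ _ _ i j k]
  ring

theorem g2phiInt_swap₂₃ (i j k : Fin 7) : g2phiInt i k j = -g2phiInt i j k := by
  simp only [g2phiInt, generalizedKronecker_swap₂₃ _ _ _ i j k]
  ring

theorem g2phi_swap₁₂ (i j k : Fin 7) : g2phi j i k = -g2phi i j k := by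
  rw [g2phi_eq_g2phiInt, g2phi_eq_g2phiInt, g2phiInt_swap₁₂, Int.cast_neg]

theorem g2phi_swap₂₃ (i j k : Fin 7) : g2phi i k j = -g2phi i j k := by
  rw [g2phi_eq_g2phiInt, g2phi_eq_g2phiInt, g2phiInt_swap₂₃, Int.cast_neg]

def starContraction (v : Fin 4 → Fin 7) : ℤ :=
  ∑ i, ∑ j, ∑ k, leviCivita ![i, j, k, v 0, v 1, v 2, v 3] * g2phiInt i j k

def squareContraction (v : Fin 4 → Fin 7) : ℤ :=
  ∑ t, (g2phiInt t (v 0) (v 1) * g2phiInt t (v 2) (v 3)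
    - g2phiInt t (v 0) (v 2) * g2phiInt t (v 1) (v 3)
    + g2phiInt t (v 0) (v 3) * g2phiInt t (v 1) (v 2))

theorem starContraction_comp_swap (v : Fin 4 → Fin 7) (i : Fin 3) :
    starContraction (v ∘ swap i.castSucc i.succ) = -starContraction v := by
  have hvec : ∀ x y z : Fin 7,
      ![x, y, z, (v ∘ swap i.castSucc i.succ) 0, (v ∘ swap i.castSucc i.succ) 1,
          (v ∘ swap i.castSucc i.succ) 2, (v ∘ swap i.castSucc i.succ) 3] =
        ![x, y, z, v 0, v 1, v 2, v 3] ∘ swap (i.castSucc.natAdd 3) (i.succ.natAdd 3) := by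
    intro x y z
    funext t
    fin_cases i <;> fin_cases t <;> rfl
  have hne : i.castSucc.natAdd 3 ≠ i.succ.natAdd 3 := by simp [Fin.ext_iff]
  simp only [starContraction, hvec, leviCivita_comp_swap _ hne, neg_mul, sum_neg_distrib]

theorem squareContraction_comp_swap (v : Fin 4 → Fin 7) (i : Fin 3) :
    squareContraction (v ∘ swap i.castSucc i.succ) = -squareContraction v := by
  simp only [squareContraction, ← sum_neg_distrib]
  refine sum_congr rfl fun t _ => ?_
  fin_cases i
  · show g2phiInt t (v 1) (v 0) * g2phiInt t (v 2) (v 3)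
      - g2phiInt t (v 1) (v 2) * g2phiInt t (v 0) (v 3)
      + g2phiInt t (v 1) (v 3) * g2phiInt t (v 0) (v 2) = _
    rw [g2phiInt_swap₂₃ t (v 0) (v 1)]
    ring
  · show g2phiInt t (v 0) (v 2) * g2phiInt t (v 1) (v 3)
      - g2phiInt t (v 0) (v 1) * g2phiInt t (v 2) (v 3)
      + g2phiInt t (v 0) (v 3) * g2phiInt t (v 2) (v 1) = _
    rw [g2phiInt_swap₂₃ t (v 1) (v 2)]
    ring
  · show g2phiInt t (v 0) (v 1) * g2phiInt t (v 3) (v 2)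
      - g2phiInt t (v 0) (v 3) * g2phiInt t (v 1) (v 2)
      + g2phiInt t (v 0) (v 2) * g2phiInt t (v 1) (v 3) = _
    rw [g2phiInt_swap₂₃ t (v 2) (v 3)]
    ring

theorem starContraction_add_two_mul_squareContraction_of_lt :
    ∀ l m o p : Fin 7, l < m → m < o → o < p →
      starContraction ![l, m, o, p] + 2 * squareContraction ![l, m, o, p] = 0 := by
  -- expanding the products over `Fin 7` keeps the kernel evaluation cheap
  simp only [starContraction, leviCivita_eq_prod_ite, Fin.prod_univ_seven, Fin.isValue,
    Fin.reduceLT, ite_true, ite_false, Matrix.cons_val, one_mul, mul_one]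
  decide +kernel

theorem starContraction_eq (v : Fin 4 → Fin 7) :
    starContraction v = -2 * squareContraction v := by
  have key := eq_zero_of_comp_swap_of_strictMono
    (D := fun v => starContraction v + 2 * squareContraction v)
    (fun v i => by rw [starContraction_comp_swap, squareContraction_comp_swap]; ring)
    (fun v hv => by
      have h := starContraction_add_two_mul_squareContraction_of_lt (v 0) (v 1) (v 2) (v 3)
        (hv (by decide)) (hv (by decide)) (hv (by decide))
      rwa [show ![v 0, v 1, v 2, v 3] = v by ext i; fin_cases i <;> rfl] at h) v
  linarith

/-- For the standard G2 3-form `φ` with cross product `P`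
(`g(P(X,Y),Z) = φ(X,Y,Z)`) and any orthonormal basis `{eᵢ}` of ℝ⁷:
(1) `X ⌟ φ = -(1/2) Σᵢ eᵢ ∧ P(eᵢ, X)` as 2-forms, and
(2) `⋆φ = -(1/6) Σᵢ (eᵢ ⌟ φ) ∧ (eᵢ ⌟ φ)` (both sides written in components; the Hodge
star is expressed through the Levi-Civita symbol). -/
theorem stmt17
    (P : (Fin 7 → ℝ) → (Fin 7 → ℝ) → (Fin 7 → ℝ))
    (hP : ∀ X Y k, P X Y k = ∑ i, ∑ j, X i * Y j * g2phi i j k)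
    (e : Fin 7 → (Fin 7 → ℝ))
    (he : ∀ i j, e i ⬝ᵥ e j = if i = j then (1 : ℝ) else 0)
    (α : Fin 7 → Fin 7 → Fin 7 → ℝ)
    (hα : ∀ i l m, α i l m = ∑ t, e i t * g2phi t l m) :
    (∀ (X : Fin 7 → ℝ) (j k : Fin 7),
      (∑ i, X i * g2phi i j k)
        = -(1 / 2) * ∑ i, (e i j * P (e i) X k - e i k * P (e i) X j)) ∧
    (∀ l m o p : Fin 7,
      (1 / 6) * (∑ i, ∑ j, ∑ k, eps7 ![i, j, k, l, m, o, p] * g2phi i j k)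
        = -(1 / 6) * ∑ i,
            2 * (α i l m * α i o p - α i l o * α i m p + α i l p * α i m o)) := by
  refine ⟨sum_mul_eq_neg_half_sum_wedge_cross g2phi_swap₁₂ g2phi_swap₂₃ hP he, fun l m o p => ?_⟩
  have hαα : ∀ a b c d, ∑ i, α i a b * α i c d = ∑ t, g2phi t a b * g2phi t c d := by
    intro a b c d
    simp only [hα]
    exact sum_dotProduct_mul_dotProduct_of_orthonormal he _ _
  have hstar : ∑ i, ∑ j, ∑ k, eps7 ![i, j, k, l, m, o, p] * g2phi i j k
      = -2 * ∑ t, (g2phi t l m * g2phi t o p - g2phi t l o * g2phi t m p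
        + g2phi t l p * g2phi t m o) := by
    simpa [starContraction, squareContraction, eps7_eq_leviCivita, g2phi_eq_g2phiInt]
      using congrArg (Int.cast : ℤ → ℝ) (starContraction_eq ![l, m, o, p])
  simp only [hstar, ← mul_sum, sum_add_distrib, sum_sub_distrib, hαα]
  ring
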